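/- Assume additionally that the columns of L sum to zero, i.e. Σ_{i=1}^N L_{ij} = 0 for every j (as holds for graph Laplacians). If Re( (h/N) Σ_{i,j=1}^N (L + hI + iα)^{-1}_{ij} ) = 1, then Re( Σ_{i,j=1}^N α_i (L + hI + iα)^{-1}_{ij} α_j ) = 0, and consequently α_i = 0 for every i. -/

import Mathlib

/-!
Write `M = L + hI + iα`, `𝟙` for the all-ones vector and `S = 𝟙ᵀ M⁻¹ 𝟙`. Zero row and column
sums of `L` give `M 𝟙 = h 𝟙 + iα` and `𝟙ᵀ M = h 𝟙ᵀ + iαᵀ`, so `M⁻¹ α` and `αᵀ M⁻¹` are affine in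
`M⁻¹ 𝟙` and `𝟙ᵀ M⁻¹`, and `αᵀ M⁻¹ α = hN - h² S - i Σ αᵢ`. The hypothesis says `h Re S = N`,
which kills the real part.

For `α = 0`: since `iα` is skew-Hermitian, `Re (w* M w) = Re (w* L w) + h ‖w‖² ≥ h ‖w‖²`.
This makes `M` invertible, and for `u = M⁻¹ α` it gives `h ‖u‖² ≤ Re (u* α) = Re (αᵀ M⁻¹ α) = 0`,
so `u = 0` and `α = M u = 0`.
-/

open Matrix

namespace Matrix

section Sums

variable {m n R : Type*} [Fintype m] [Fintype n]

theorem sum_sum_mul_mul_eq_dotProduct_mulVec [NonUnitalSemiring R] (v : m → R) (A : Matrix m n R)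
    (w : n → R) :
    ∑ i, ∑ j, v i * A i j * w j = v ⬝ᵥ A *ᵥ w := by
  simp only [dotProduct, mulVec, Finset.mul_sum, mul_assoc]

theorem sum_sum_eq_one_dotProduct_mulVec_one [NonAssocSemiring R] (A : Matrix m n R) :
    ∑ i, ∑ j, A i j = 1 ⬝ᵥ A *ᵥ 1 := by
  simp only [dotProduct, mulVec, Pi.one_apply, one_mul, mul_one]

end Sums

variable {n K : Type*} [Fintype n] [DecidableEq n] [Field K] {M : Matrix n n K} {c : K} {b : n → K}

theorem inv_mulVec_eq_one_sub_of_mulVec_one (hM : IsUnit M.det) (hb : M *ᵥ 1 = c • 1 + b) :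
    M⁻¹ *ᵥ b = 1 - c • M⁻¹ *ᵥ 1 := by
  have : M⁻¹ *ᵥ (c • 1 + b) = 1 := by rw [← hb, mulVec_mulVec, nonsing_inv_mul M hM, one_mulVec]
  rw [mulVec_add, mulVec_smul] at this
  exact eq_sub_of_add_eq' this

theorem vecMul_inv_eq_one_sub_of_one_vecMul (hM : IsUnit M.det) (hb : 1 ᵥ* M = c • 1 + b) :
    b ᵥ* M⁻¹ = 1 - c • 1 ᵥ* M⁻¹ := by
  have : (c • 1 + b) ᵥ* M⁻¹ = 1 := by rw [← hb, vecMul_vecMul, mul_nonsing_inv M hM, vecMul_one]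
  rw [add_vecMul, smul_vecMul] at this
  exact eq_sub_of_add_eq' this

theorem dotProduct_inv_mulVec_self_of_mulVec_one_of_one_vecMul (hM : IsUnit M.det)
    (hrow : M *ᵥ 1 = c • 1 + b) (hcol : 1 ᵥ* M = c • 1 + b) :
    b ⬝ᵥ M⁻¹ *ᵥ b = ∑ i, b i - c * Fintype.card n + c ^ 2 * (1 ⬝ᵥ M⁻¹ *ᵥ 1) := by
  have hS : b ⬝ᵥ M⁻¹ *ᵥ 1 = Fintype.card n - c * (1 ⬝ᵥ M⁻¹ *ᵥ 1) := by
    rw [dotProduct_mulVec, vecMul_inv_eq_one_sub_of_one_vecMul hM hcol, sub_dotProduct,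
      smul_dotProduct, one_dotProduct_one, dotProduct_mulVec, smul_eq_mul]
  rw [inv_mulVec_eq_one_sub_of_mulVec_one hM hrow, dotProduct_sub, dotProduct_smul, hS,
    dotProduct_one, smul_eq_mul]
  ring

end Matrix

open Complex ComplexOrder

section ShiftedMatrix

variable {n : Type*} [Fintype n]

theorem re_star_dotProduct_map_ofReal_mulVec (L : Matrix n n ℝ) (w : n → ℂ) :
    (star w ⬝ᵥ L.map (fun x => (x : ℂ)) *ᵥ w).re =
      (fun i => (w i).re) ⬝ᵥ L *ᵥ (fun i => (w i).re) +
        (fun i => (w i).im) ⬝ᵥ L *ᵥ (fun i => (w i).im) := by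
  simp only [dotProduct, mulVec, re_sum, Finset.mul_sum, ← Finset.sum_add_distrib]
  refine Finset.sum_congr rfl fun i _ => Finset.sum_congr rfl fun j _ => ?_
  simp [mul_re, mul_im]

variable [DecidableEq n]

def shiftedMatrix (L : Matrix n n ℝ) (h : ℝ) (α : n → ℝ) : Matrix n n ℂ :=
  L.map (fun x => (x : ℂ)) + (h : ℂ) • 1 + I • diagonal (fun i => (α i : ℂ))

variable {L : Matrix n n ℝ} {h : ℝ} {α : n → ℝ}

theorem shiftedMatrix_mulVec_one (hL : ∀ i, ∑ j, L i j = 0) :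
    shiftedMatrix L h α *ᵥ 1 = (h : ℂ) • 1 + I • fun i => (α i : ℂ) := by
  ext i
  simp [shiftedMatrix, mulVec, dotProduct, Finset.sum_add_distrib, ← ofReal_sum, hL, one_apply,
    diagonal_apply]

theorem one_vecMul_shiftedMatrix (hL : ∀ j, ∑ i, L i j = 0) :
    1 ᵥ* shiftedMatrix L h α = (h : ℂ) • 1 + I • fun i => (α i : ℂ) := by
  ext j
  simp [shiftedMatrix, vecMul, dotProduct, Finset.sum_add_distrib, ← ofReal_sum, hL, one_apply,
    diagonal_apply]

theorem im_star_dotProduct_diagonal_ofReal_mulVec (α : n → ℝ) (w : n → ℂ) :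
    (star w ⬝ᵥ diagonal (fun i => (α i : ℂ)) *ᵥ w).im = 0 := by
  simp [mulVec_diagonal, dotProduct, im_sum, mul_im]
  exact Finset.sum_eq_zero fun i _ => by ring

theorem le_re_star_dotProduct_shiftedMatrix_mulVec (hL : L.PosSemidef) (w : n → ℂ) :
    h * (star w ⬝ᵥ w).re ≤ (star w ⬝ᵥ shiftedMatrix L h α *ᵥ w).re := by
  have hLw := re_star_dotProduct_map_ofReal_mulVec L w
  have hre := hL.dotProduct_mulVec_nonneg (fun i => (w i).re)
  have him := hL.dotProduct_mulVec_nonneg (fun i => (w i).im)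
  simp only [star_trivial] at hre him
  simp [shiftedMatrix, add_mulVec, smul_mulVec, hLw, im_star_dotProduct_diagonal_ofReal_mulVec]
  linarith

theorem eq_zero_of_re_star_dotProduct_shiftedMatrix_mulVec_nonpos (hL : L.PosSemidef)
    (hh : 0 < h) {w : n → ℂ} (hw : (star w ⬝ᵥ shiftedMatrix L h α *ᵥ w).re ≤ 0) : w = 0 := by
  have hge := le_re_star_dotProduct_shiftedMatrix_mulVec (h := h) (α := α) hL w
  obtain ⟨hre, him⟩ := nonneg_iff.1 (dotProduct_star_self_nonneg w)
  rw [← dotProduct_star_self_eq_zero]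
  exact Complex.ext (le_antisymm (nonpos_of_mul_nonpos_right (hge.trans hw) hh) hre) him.symm

theorem isUnit_det_shiftedMatrix (hL : L.PosSemidef) (hh : 0 < h) :
    IsUnit (shiftedMatrix L h α).det := by
  refine isUnit_iff_ne_zero.2 fun hdet => ?_
  obtain ⟨w, hw0, hw⟩ := exists_mulVec_eq_zero_iff.2 hdet
  exact hw0 (eq_zero_of_re_star_dotProduct_shiftedMatrix_mulVec_nonpos (α := α) hL hh
    (w := w) (by simp [hw]))

theorem eq_zero_of_re_dotProduct_inv_shiftedMatrix_mulVec_eq_zero (hL : L.PosSemidef)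
    (hh : 0 < h) {β : n → ℝ}
    (hβ : ((fun i => (β i : ℂ)) ⬝ᵥ (shiftedMatrix L h α)⁻¹ *ᵥ fun i => (β i : ℂ)).re = 0) :
    β = 0 := by
  set b : n → ℂ := fun i => (β i : ℂ)
  set u := (shiftedMatrix L h α)⁻¹ *ᵥ b
  have hMu : shiftedMatrix L h α *ᵥ u = b := by
    rw [mulVec_mulVec, mul_nonsing_inv _ (isUnit_det_shiftedMatrix hL hh), one_mulVec]
  have hu : u = 0 := by
    refine eq_zero_of_re_star_dotProduct_shiftedMatrix_mulVec_nonpos (α := α) hL hh ?_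
    have hb : star b = b := funext fun i => conj_ofReal (β i)
    rw [hMu, star_dotProduct, hb, star_def, conj_re, hβ]
  funext i
  simpa [hu, b] using (congrFun hMu i).symm

theorem dotProduct_inv_shiftedMatrix_mulVec_self (hL : L.PosSemidef) (hh : 0 < h)
    (hrow : ∀ i, ∑ j, L i j = 0) (hcol : ∀ j, ∑ i, L i j = 0) :
    ((fun i => (α i : ℂ)) ⬝ᵥ (shiftedMatrix L h α)⁻¹ *ᵥ fun i => (α i : ℂ)) =
      h * Fintype.card n - h ^ 2 * (1 ⬝ᵥ (shiftedMatrix L h α)⁻¹ *ᵥ 1) - I * ∑ i, (α i : ℂ) := by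
  have hIα := dotProduct_inv_mulVec_self_of_mulVec_one_of_one_vecMul
    (isUnit_det_shiftedMatrix (α := α) hL hh) (shiftedMatrix_mulVec_one hrow)
    (one_vecMul_shiftedMatrix hcol)
  simp only [smul_dotProduct, mulVec_smul, dotProduct_smul, smul_eq_mul, Pi.smul_apply,
    ← Finset.mul_sum] at hIα
  set Q := (fun i => (α i : ℂ)) ⬝ᵥ (shiftedMatrix L h α)⁻¹ *ᵥ fun i => (α i : ℂ)
  linear_combination -hIα + Q * I_sq

end ShiftedMatrix

/-- If the columns of `L` sum to zero and `Re((h/N) Σᵢⱼ (L+hI+iα)⁻¹ᵢⱼ) = 1`, then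
`Re(Σᵢⱼ αᵢ (L+hI+iα)⁻¹ᵢⱼ αⱼ) = 0` and consequently `α = 0`. -/
theorem stationarity_forces_alpha_zero (N : ℕ) (hN : 0 < N)
    (L : Matrix (Fin N) (Fin N) ℝ) (hLsymm : L.IsSymm) (hLpsd : L.PosSemidef)
    (hLcol : ∀ j, ∑ i, L i j = 0)
    (h : ℝ) (hh : 0 < h) (α : Fin N → ℝ)
    (hyp : (((h : ℂ) / (N : ℂ)) * ∑ i, ∑ j,
        (L.map (fun x => (x : ℂ)) + (h : ℂ) • 1
          + Complex.I • Matrix.diagonal (fun i => (α i : ℂ)))⁻¹ i j).re = 1) :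
    (∑ i, ∑ j, (α i : ℂ) *
        ((L.map (fun x => (x : ℂ)) + (h : ℂ) • 1
          + Complex.I • Matrix.diagonal (fun i => (α i : ℂ)))⁻¹ i j) * (α j : ℂ)).re = 0
    ∧ ∀ i, α i = 0 := by
  change ((h : ℂ) / N * ∑ i, ∑ j, (shiftedMatrix L h α)⁻¹ i j).re = 1 at hyp
  change (∑ i, ∑ j, (α i : ℂ) * (shiftedMatrix L h α)⁻¹ i j * (α j : ℂ)).re = 0 ∧ _
  rw [sum_sum_eq_one_dotProduct_mulVec_one] at hyp
  rw [sum_sum_mul_mul_eq_dotProduct_mulVec]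
  have hLrow : ∀ i, ∑ j, L i j = 0 := fun i => by simpa only [hLsymm.apply] using hLcol i
  have hS : h * (1 ⬝ᵥ (shiftedMatrix L h α)⁻¹ *ᵥ 1).re = N := by
    rw [← ofReal_natCast, ← ofReal_div, re_ofReal_mul] at hyp
    field_simp at hyp
    linarith
  have hQ : ((fun i => (α i : ℂ)) ⬝ᵥ (shiftedMatrix L h α)⁻¹ *ᵥ fun i => (α i : ℂ)).re = 0 := by
    rw [dotProduct_inv_shiftedMatrix_mulVec_self hLpsd hh hLrow hLcol]
    simp [mul_re, ← ofReal_pow]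
    linear_combination -h * hS
  exact ⟨hQ, congrFun (eq_zero_of_re_dotProduct_inv_shiftedMatrix_mulVec_eq_zero hLpsd hh hQ)⟩
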